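/- Let Ω ⊂ ℝ^m be open, u ∈ W^{1,2}_{loc}(Ω), and ε₀ > 0. Define S = {x ∈ Ω : liminf_{r→0⁺} r^{2−m} ∫_{B_r(x)} |∇u|² ≥ ε₀}. Suppose that the almost-monotonicity r₁^{2−m}∫_{B_{r₁}(z)}|∇u|² ≤ r₂^{2−m}∫_{B_{r₂}(z)}|∇u|² + C r₂^{α} holds for all z ∈ Ω, 0 < r₁ ≤ r₂ < dist(z,∂Ω), with fixed constants C ≥ 0 and α > 0. Then S is relatively closed in Ω: more precisely, if x₀ ∉ S then there exists r₀ > 0 such that B_{r₀}(x₀) ∩ S = ∅. -/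
import Mathlib


open MeasureTheory Metric Filter Set

/-- under almost-monotonicity, the concentration set
`S = {x ∈ Ω : liminf_{r→0⁺} r^{2-m} ∫_{B_r(x)} |∇u|² ≥ ε₀}` is relatively closed in `Ω`:
every `x₀ ∈ Ω \ S` has a ball `B_{r₀}(x₀)` disjoint from `S`. Here
`|∇u|² = Σ_α |∂_α u|²`. -/
theorem stmt12 (m K : ℕ) (hm : 2 ≤ m) (Ω : Set (EuclideanSpace ℝ (Fin m))) (hΩ : IsOpen Ω)
    (u : EuclideanSpace ℝ (Fin m) → EuclideanSpace ℝ (Fin K))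
    (hloc : LocallyIntegrableOn
      (fun x => ∑ α : Fin m, ‖fderiv ℝ u x (EuclideanSpace.single α 1)‖ ^ 2) Ω)
    (ε₀ C a : ℝ) (hε₀ : 0 < ε₀) (hC : 0 ≤ C) (ha : 0 < a)
    (hmono : ∀ z ∈ Ω, ∀ r₁ r₂ : ℝ, 0 < r₁ → r₁ ≤ r₂ → ball z r₂ ⊆ Ω →
      r₁ ^ ((2 : ℝ) - m) * (∫ x in ball z r₁,
          ∑ α : Fin m, ‖fderiv ℝ u x (EuclideanSpace.single α 1)‖ ^ 2)
        ≤ r₂ ^ ((2 : ℝ) - m) * (∫ x in ball z r₂,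
            ∑ α : Fin m, ‖fderiv ℝ u x (EuclideanSpace.single α 1)‖ ^ 2) + C * r₂ ^ a)
    (x₀ : EuclideanSpace ℝ (Fin m)) (hx₀ : x₀ ∈ Ω)
    (hx₀S : ¬ ε₀ ≤ liminf (fun r : ℝ => r ^ ((2 : ℝ) - m) * ∫ x in ball x₀ r,
        ∑ α : Fin m, ‖fderiv ℝ u x (EuclideanSpace.single α 1)‖ ^ 2)
      (nhdsWithin 0 (Ioi 0))) :
    ∃ r₀ : ℝ, 0 < r₀ ∧
      ball x₀ r₀ ∩ {z | z ∈ Ω ∧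
        ε₀ ≤ liminf (fun r : ℝ => r ^ ((2 : ℝ) - m) * ∫ x in ball z r,
            ∑ α : Fin m, ‖fderiv ℝ u x (EuclideanSpace.single α 1)‖ ^ 2)
          (nhdsWithin 0 (Ioi 0))} = ∅ := by
  set g : EuclideanSpace ℝ (Fin m) → ℝ :=
    fun x => ∑ α : Fin m, ‖fderiv ℝ u x (EuclideanSpace.single α 1)‖ ^ 2 with hgdef
  have hg0 : ∀ x, 0 ≤ g x := fun x => Finset.sum_nonneg fun α _ => sq_nonneg _
  have hI0 : ∀ (z : EuclideanSpace ℝ (Fin m)) (r : ℝ), 0 ≤ ∫ x in ball z r, g x :=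
    fun z r => setIntegral_nonneg measurableSet_ball fun x _ => hg0 x
  have hF0 : ∀ (z : EuclideanSpace ℝ (Fin m)), ∀ r : ℝ, 0 < r →
      0 ≤ r ^ ((2 : ℝ) - m) * ∫ x in ball z r, g x :=
    fun z r hr => mul_nonneg (Real.rpow_nonneg hr.le _) (hI0 z r)
  rw [not_le] at hx₀S
  set L : ℝ := liminf (fun r : ℝ => r ^ ((2 : ℝ) - m) * ∫ x in ball x₀ r, g x)
      (nhdsWithin 0 (Ioi 0)) with hLdef
  obtain ⟨R, hR0, hRΩ⟩ := Metric.isOpen_iff.mp hΩ x₀ hx₀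
  -- the liminf at x₀ is cobounded (below)
  have hcobdd : IsCoboundedUnder (· ≥ ·) (nhdsWithin (0:ℝ) (Ioi 0))
      (fun r : ℝ => r ^ ((2 : ℝ) - m) * ∫ x in ball x₀ r, g x) := by
    apply IsBoundedUnder.isCoboundedUnder_ge
    refine ⟨(R/2) ^ ((2 : ℝ) - m) * (∫ x in ball x₀ (R/2), g x) + C * (R/2) ^ a, ?_⟩
    rw [eventually_map]
    filter_upwards [Ioc_mem_nhdsGT_of_mem (⟨le_refl (0:ℝ), half_pos hR0⟩ : (0:ℝ) ∈ Ico 0 (R/2))]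
      with s hs
    exact hmono x₀ hx₀ s (R/2) hs.1 hs.2 ((ball_subset_ball (by linarith)).trans hRΩ)
  -- choose b with L < b, 0 < b < ε₀
  set b : ℝ := max ((L + ε₀) / 2) (ε₀ / 2) with hbdef
  have hLb : L < b := lt_of_lt_of_le (by linarith) (le_max_left _ _)
  have hb0 : 0 < b := lt_of_lt_of_le (by linarith) (le_max_right _ _)
  have hbε : b < ε₀ := max_lt (by linarith) (by linarith)
  set q : ℝ := (b + ε₀) / 2 with hqdef
  have hbq : b < q := by rw [hqdef]; linarith
  have hqε : q < ε₀ := by rw [hqdef]; linarith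
  have hfreq : ∃ᶠ r in nhdsWithin (0:ℝ) (Ioi 0),
      r ^ ((2 : ℝ) - m) * (∫ x in ball x₀ r, g x) < b :=
    Filter.frequently_lt_of_liminf_lt hcobdd hLb
  -- choose c ∈ (0,1) with c^(2-m) * b < q
  have hcont : Tendsto (fun c : ℝ => c ^ ((2 : ℝ) - m) * b) (nhds 1)
      (nhds ((1:ℝ) ^ ((2 : ℝ) - m) * b)) :=
    ((Real.continuousAt_rpow_const 1 _ (Or.inl one_ne_zero)).mul continuousAt_const)
  have h1q : (1:ℝ) ^ ((2 : ℝ) - m) * b < q := by rw [Real.one_rpow, one_mul]; exact hbq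
  have hevc : ∀ᶠ c in nhdsWithin (1:ℝ) (Iio 1),
      (c ^ ((2 : ℝ) - m) * b < q ∧ 0 < c) ∧ c < 1 := by
    apply Filter.Eventually.and _ self_mem_nhdsWithin
    apply nhdsWithin_le_nhds
    exact (hcont.eventually_lt_const h1q).and (eventually_gt_nhds one_pos)
  obtain ⟨c, ⟨hcq, hc0⟩, hc1⟩ := hevc.exists
  -- C * r^a → 0 as r → 0⁺
  have hCr : Tendsto (fun r : ℝ => C * r ^ a) (nhdsWithin (0:ℝ) (Ioi 0)) (nhds 0) := by
    have h := ((Real.continuousAt_rpow_const 0 a (Or.inr ha.le)).tendsto).const_mul C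
    rw [Real.zero_rpow ha.ne', mul_zero] at h
    exact h.mono_left nhdsWithin_le_nhds
  have hevC : ∀ᶠ r in nhdsWithin (0:ℝ) (Ioi 0), C * r ^ a < ε₀ - q :=
    hCr.eventually_lt_const (by linarith)
  -- choose r
  obtain ⟨r, hFb, hCr', hrIoo⟩ := (hfreq.and_eventually (hevC.and
    (Ioo_mem_nhdsGT_of_mem (⟨le_refl (0:ℝ), hR0⟩ : (0:ℝ) ∈ Ico 0 R)))).exists
  obtain ⟨hr0, hrR⟩ := hrIoo
  have hint : IntegrableOn g (ball x₀ r) volume :=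
    (hloc.integrableOn_compact_subset ((closedBall_subset_ball hrR).trans hRΩ)
      (isCompact_closedBall _ _)).mono_set ball_subset_closedBall
  have hrc0 : 0 < c * r := mul_pos hc0 hr0
  refine ⟨(1 - c) * r, mul_pos (by linarith) hr0, ?_⟩
  rw [eq_empty_iff_forall_notMem]
  rintro z ⟨hzball, hzΩ, hzS⟩
  have hdz : dist z x₀ < (1 - c) * r := mem_ball.mp hzball
  have hballr : ball z (c * r) ⊆ ball x₀ r := ball_subset_ball' (by nlinarith)
  have hsubΩ : ball z (c * r) ⊆ Ω := hballr.trans ((ball_subset_ball hrR.le).trans hRΩ)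
  have hz1 : (c * r) ^ ((2 : ℝ) - m) * (∫ x in ball z (c * r), g x)
      ≤ (c * r) ^ ((2 : ℝ) - m) * (∫ x in ball x₀ r, g x) := by
    refine mul_le_mul_of_nonneg_left ?_ (Real.rpow_nonneg hrc0.le _)
    exact setIntegral_mono_set hint (Filter.Eventually.of_forall fun x => hg0 x)
      (HasSubset.Subset.eventuallyLE hballr)
  have hz2 : (c * r) ^ ((2 : ℝ) - m) * (∫ x in ball x₀ r, g x)
      ≤ c ^ ((2 : ℝ) - m) * b := by
    rw [Real.mul_rpow hc0.le hr0.le, mul_assoc]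
    exact mul_le_mul_of_nonneg_left hFb.le (Real.rpow_nonneg hc0.le _)
  have hCcr : C * (c * r) ^ a ≤ C * r ^ a :=
    mul_le_mul_of_nonneg_left (Real.rpow_le_rpow hrc0.le (by nlinarith) ha.le) hC
  have hkey : ∀ᶠ s in nhdsWithin (0:ℝ) (Ioi 0),
      s ^ ((2 : ℝ) - m) * (∫ x in ball z s, g x)
        ≤ c ^ ((2 : ℝ) - m) * b + C * (c * r) ^ a := by
    filter_upwards [Ioc_mem_nhdsGT_of_mem (⟨le_refl (0:ℝ), hrc0⟩ : (0:ℝ) ∈ Ico 0 (c * r))]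
      with s hs
    have h := hmono z hzΩ s (c * r) hs.1 hs.2 hsubΩ
    linarith
  have hlim : liminf (fun s : ℝ => s ^ ((2 : ℝ) - m) * ∫ x in ball z s, g x)
      (nhdsWithin (0:ℝ) (Ioi 0)) ≤ c ^ ((2 : ℝ) - m) * b + C * (c * r) ^ a := by
    refine Filter.liminf_le_of_frequently_le hkey.frequently ?_
    refine ⟨0, ?_⟩
    rw [eventually_map]
    filter_upwards [self_mem_nhdsWithin] with s hs
    exact hF0 z s hs
  linarith
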